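/- arXiv:2106.11194 — 6 statements merged into one kernel-verified Lean document; each statement's English description precedes it below -/
import Mathlib

section
/- (Permanence, Theorem 2.1.) Assume p := Σ_{j=1}^m p_j > δ and let K > 0 be the unique number with Σ_j p_j e^{−a_j K} = δ. Then every solution x of the Nicholson equation defined on [t₀−τ, ∞) with admissible initial data satisfies K e^{−2δβ⁺τ} ≤ liminf_{t→∞} x(t) ≤ limsup_{t→∞} x(t) ≤ K e^{2(δ+p)β⁺τ}. In particular the equation is permanent: all such solutions are eventually bounded between fixed positive constants. -/
/-!
A solution stays positive, and as long as it is nonnegative `x' ≥ -δ β⁺ x`, so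
`x s ≤ x t e^{δ β⁺ (t - s)}` for `t₀ ≤ s ≤ t`; in the other direction the birth term is at most
`(∑ p_j) max_{[t - τ, t]} x`, so past a window on which `x ≤ M` it grows at most like
`M e^{β⁺ (∑ p_j)(t - s)}`.

At times where `x` is close to its limsup and `x'` is almost nonnegative, the birth term almost
balances `δ x`. Were the limsup above `K e^{(δ + ∑ p_j) β⁺ τ}`, this balance would force some
`x (t - σ_j t)` to be at most some `k > K`, and the two growth estimates would carry this low
value forward to `t`, a contradiction. Symmetrically, near the liminf some `x (t - σ_j t)` is at
least some `k < K`, which gives `liminf x ≥ K e^{-δ β⁺ τ}`. The same arguments at first hitting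
times give the a priori bounds that make liminf and limsup finite and positive.
-/

/-- A solution of the Nicholson equation
`x'(t) = β(t)(Σ_j p_j x(t−τ_j(t)) e^{−a_j x(t−σ_j(t))} − δ x(t))`, `t ≥ t₀`,
defined on `[t₀ − τbar, ∞)`, with admissible initial data
(`x ≥ 0` on `[t₀ − τbar, t₀)` and `x(t₀) > 0`). -/
def NicholsonSolution (m : ℕ) (p a : Fin m → ℝ) (δ t₀ τbar : ℝ)
    (β : ℝ → ℝ) (τ σ : Fin m → ℝ → ℝ) (x : ℝ → ℝ) : Prop :=
  ContinuousOn x (Set.Ici (t₀ - τbar)) ∧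
  (∀ t ∈ Set.Ici t₀, HasDerivWithinAt x
      (β t * ((∑ j, p j * x (t - τ j t) * Real.exp (-(a j) * x (t - σ j t))) - δ * x t))
      (Set.Ici t₀) t) ∧
  (∀ s, t₀ - τbar ≤ s → s < t₀ → 0 ≤ x s) ∧
  0 < x t₀

open Set Filter Topology Real

theorem HasDerivAt.nonneg_of_le_left {f : ℝ → ℝ} {f' a b : ℝ} (hf : HasDerivAt f f' b)
    (hab : a < b) (hle : ∀ r ∈ Ioo a b, f r ≤ f b) : 0 ≤ f' := by
  refine ge_of_tendsto hf.tendsto_slope_zero_left ?_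
  filter_upwards [Ioo_mem_nhdsLT (sub_neg.2 hab)] with t ht
  have hfbt := hle (b + t) ⟨by linarith [ht.1], by linarith [ht.2]⟩
  exact mul_nonneg_of_nonpos_of_nonpos (inv_nonpos.2 ht.2.le) (sub_nonpos.2 hfbt)

theorem exists_first_hit {f : ℝ → ℝ} {a b c : ℝ} (hab : a ≤ b) (hf : ContinuousOn f (Icc a b))
    (ha : f a < c) (hb : c ≤ f b) : ∃ s ∈ Ioc a b, f s = c ∧ ∀ r ∈ Ico a s, f r < c := by
  set U := Icc a b ∩ f ⁻¹' Ici c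
  have hUbdd : BddBelow U := bddBelow_Icc.mono inter_subset_left
  have hUmem : sInf U ∈ U := (hf.preimage_isClosed_of_isClosed isClosed_Icc isClosed_Ici).csInf_mem
    ⟨b, right_mem_Icc.2 hab, hb⟩ hUbdd
  obtain ⟨⟨has, hsb⟩, hcs⟩ := hUmem
  obtain ⟨s, hs, hfs⟩ := intermediate_value_Icc has (hf.mono (Icc_subset_Icc_right hsb))
    ⟨ha.le, hcs⟩
  have hs_eq : s = sInf U :=
    le_antisymm hs.2 (csInf_le hUbdd ⟨⟨hs.1, hs.2.trans hsb⟩, hfs.ge⟩)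
  have has' : a < s := hs.1.lt_of_ne (by rintro rfl; exact ha.ne hfs)
  refine ⟨s, ⟨has', hs_eq ▸ hsb⟩, hfs, fun r hr => not_le.1 fun hcr =>
    hr.2.not_ge (hs_eq ▸ csInf_le hUbdd ⟨⟨hr.1, (hs_eq ▸ hr.2).le.trans hsb⟩, hcr⟩)⟩

theorem exists_first_hit_deriv_nonneg {f f' : ℝ → ℝ} {a b c : ℝ} (hab : a ≤ b)
    (hf : ContinuousOn f (Icc a b)) (hf' : ∀ t ∈ Ioc a b, HasDerivAt f (f' t) t)
    (ha : f a < c) (hb : c ≤ f b) :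
    ∃ s ∈ Ioc a b, f s = c ∧ (∀ r ∈ Ico a s, f r < c) ∧ 0 ≤ f' s := by
  obtain ⟨s, hs, hfs, hbefore⟩ := exists_first_hit hab hf ha hb
  exact ⟨s, hs, hfs, hbefore, (hf' s hs).nonneg_of_le_left hs.1
    fun r hr => hfs ▸ (hbefore r ⟨hr.1.le, hr.2⟩).le⟩

theorem exists_ge_deriv_ge_of_frequently_ge {f f' : ℝ → ℝ} {T c ε : ℝ} (hε : 0 < ε)
    (hf : ContinuousOn f (Ici T)) (hf' : ∀ t ∈ Ioi T, HasDerivAt f (f' t) t)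
    (hfreq : ∃ᶠ t in atTop, c ≤ f t) : ∃ t ∈ Ioi T, c ≤ f t ∧ -ε ≤ f' t := by
  by_contra! hfall
  by_cases hdip : ∃ T' ∈ Ioi T, f T' < c
  · obtain ⟨T', hT', hfT'⟩ := hdip
    obtain ⟨t, hT't, hct⟩ := frequently_atTop.1 hfreq T'
    obtain ⟨s, hs, hfs, -, hf's⟩ := exists_first_hit_deriv_nonneg hT't
      (hf.mono fun r hr => hT'.le.trans hr.1) (fun r hr => hf' r (hT'.trans hr.1)) hfT' hct
    linarith [hfall s (hT'.trans hs.1) hfs.ge]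
  · push Not at hdip
    have hanti : AntitoneOn (fun t => f t + ε * t) (Ici T) := by
      refine antitoneOn_of_hasDerivWithinAt_nonpos (f' := fun t => f' t + ε) (convex_Ici T)
        (hf.add (by fun_prop)) (fun t ht => ?_) (fun t ht => ?_)
      · rw [interior_Ici] at ht ⊢
        simpa using ((hf' t ht).fun_add ((hasDerivAt_id t).const_mul ε)).hasDerivWithinAt
      · rw [interior_Ici] at ht
        linarith [hfall t ht (hdip t ht)]
    set t := T + (|f T - c| + 1) / ε
    have hTt : T < t := lt_add_of_pos_right T (by positivity)
    have hdrop : ε * (t - T) = |f T - c| + 1 := by simp only [t]; field_simp; ring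
    have := hanti self_mem_Ici hTt.le hTt.le
    linarith [le_abs_self (f T - c), hdip t hTt]

theorem exists_le_deriv_le_of_frequently_le {f f' : ℝ → ℝ} {T c ε : ℝ} (hε : 0 < ε)
    (hf : ContinuousOn f (Ici T)) (hf' : ∀ t ∈ Ioi T, HasDerivAt f (f' t) t)
    (hfreq : ∃ᶠ t in atTop, f t ≤ c) : ∃ t ∈ Ioi T, f t ≤ c ∧ f' t ≤ ε := by
  obtain ⟨t, ht, hft, hf't⟩ := exists_ge_deriv_ge_of_frequently_ge (f := -f) (f' := -f') hε hf.neg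
    (fun t ht => (hf' t ht).neg) (hfreq.mono fun _ => neg_le_neg)
  exact ⟨t, ht, neg_le_neg_iff.1 hft, by simpa using hf't⟩

structure NicholsonEquation where
  m : ℕ
  p : Fin m → ℝ
  a : Fin m → ℝ
  δ : ℝ
  t₀ : ℝ
  β : ℝ → ℝ
  τ : Fin m → ℝ → ℝ
  σ : Fin m → ℝ → ℝ
  τbar : ℝ
  βmin : ℝ
  βmax : ℝ
  nonempty : Nonempty (Fin m)
  p_pos : ∀ j, 0 < p j
  a_pos : ∀ j, 0 < a j
  δ_pos : 0 < δ
  βmin_pos : 0 < βmin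
  β_mem : ∀ t, t₀ ≤ t → β t ∈ Icc βmin βmax
  τ_mem : ∀ j t, t₀ ≤ t → τ j t ∈ Icc 0 τbar
  σ_mem : ∀ j t, t₀ ≤ t → σ j t ∈ Icc 0 τbar

namespace NicholsonEquation

variable (E : NicholsonEquation)

instance : Nonempty (Fin E.m) := E.nonempty

def IsSolution (x : ℝ → ℝ) : Prop :=
  NicholsonSolution E.m E.p E.a E.δ E.t₀ E.τbar E.β E.τ E.σ x

noncomputable def production (x : ℝ → ℝ) (t : ℝ) : ℝ :=
  ∑ j, E.p j * x (t - E.τ j t) * exp (-(E.a j) * x (t - E.σ j t))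

/-- Per-capita birth rate at a constant population `u`; the equilibrium `K` solves
`birthRate K = δ`. -/
noncomputable def birthRate (u : ℝ) : ℝ := ∑ j, E.p j * exp (-(E.a j) * u)

theorem τbar_nonneg : 0 ≤ E.τbar :=
  (E.τ_mem (Classical.arbitrary _) E.t₀ le_rfl).1.trans (E.τ_mem _ E.t₀ le_rfl).2

theorem t₀_sub_τbar_le : E.t₀ - E.τbar ≤ E.t₀ := sub_le_self _ E.τbar_nonneg

theorem β_pos {t : ℝ} (ht : E.t₀ ≤ t) : 0 < E.β t := E.βmin_pos.trans_le (E.β_mem t ht).1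

theorem βmax_pos : 0 < E.βmax := (E.β_pos le_rfl).trans_le (E.β_mem E.t₀ le_rfl).2

theorem sum_p_nonneg : 0 ≤ ∑ j, E.p j := Finset.sum_nonneg fun j _ => (E.p_pos j).le

theorem birthRate_strictAnti : StrictAnti E.birthRate := fun u v huv =>
  Finset.sum_lt_sum_of_nonempty Finset.univ_nonempty fun j _ =>
    mul_lt_mul_of_pos_left (exp_lt_exp.2 (by nlinarith [E.a_pos j])) (E.p_pos j)

theorem sub_τ_mem {t : ℝ} (ht : E.t₀ ≤ t) (j : Fin E.m) : t - E.τ j t ∈ Icc (t - E.τbar) t :=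
  ⟨by linarith [(E.τ_mem j t ht).2], by linarith [(E.τ_mem j t ht).1]⟩

theorem sub_σ_mem {t : ℝ} (ht : E.t₀ ≤ t) (j : Fin E.m) : t - E.σ j t ∈ Icc (t - E.τbar) t :=
  ⟨by linarith [(E.σ_mem j t ht).2], by linarith [(E.σ_mem j t ht).1]⟩

theorem production_nonneg {x : ℝ → ℝ} {t : ℝ} (hx : ∀ j, 0 ≤ x (t - E.τ j t)) :
    0 ≤ E.production x t :=
  Finset.sum_nonneg fun j _ => by have := E.p_pos j; have := hx j; positivity

theorem neg_le_of_neg_le_β_mul {t y ε : ℝ} (ht : E.t₀ ≤ t) (hε : 0 ≤ ε)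
    (h : -(E.βmin * ε) ≤ E.β t * y) : -ε ≤ y := by
  have := E.βmin_pos; have := E.β_mem t ht
  by_contra! hy
  nlinarith [mul_le_mul_of_nonneg_right this.1 (by linarith : 0 ≤ -y)]

theorem le_of_β_mul_le {t y ε : ℝ} (ht : E.t₀ ≤ t) (hε : 0 ≤ ε)
    (h : E.β t * y ≤ E.βmin * ε) : y ≤ ε := by
  have := E.neg_le_of_neg_le_β_mul ht hε (y := -y) (by linarith)
  linarith

theorem production_lt {x : ℝ → ℝ} {t V k : ℝ} (hV₀ : 0 < V)
    (hV : ∀ j, x (t - E.τ j t) ≤ V) (hk : ∀ j, k < x (t - E.σ j t)) :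
    E.production x t < V * E.birthRate k := by
  rw [production, birthRate, Finset.mul_sum]
  refine Finset.sum_lt_sum_of_nonempty Finset.univ_nonempty fun j _ => ?_
  have hexp : exp (-(E.a j) * x (t - E.σ j t)) < exp (-(E.a j) * k) :=
    exp_lt_exp.2 (by nlinarith [E.a_pos j, hk j])
  calc E.p j * x (t - E.τ j t) * exp (-(E.a j) * x (t - E.σ j t))
      ≤ E.p j * V * exp (-(E.a j) * x (t - E.σ j t)) := by
        gcongr
        · exact (E.p_pos j).le
        · exact hV j
    _ < E.p j * V * exp (-(E.a j) * k) := by have := E.p_pos j; gcongr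
    _ = V * (E.p j * exp (-(E.a j) * k)) := by ring

namespace IsSolution

variable {E} {x : ℝ → ℝ}

theorem continuousOn (hx : E.IsSolution x) : ContinuousOn x (Ici (E.t₀ - E.τbar)) := hx.1

theorem hasDerivAt (hx : E.IsSolution x) {t : ℝ} (ht : E.t₀ < t) :
    HasDerivAt x (E.β t * (E.production x t - E.δ * x t)) t :=
  (hx.2.1 t ht.le).hasDerivAt (Ici_mem_nhds ht)

theorem le_mul_exp_of_nonneg (hx : E.IsSolution x) {s t : ℝ}
    (hnn : ∀ r ∈ Ico (E.t₀ - E.τbar) t, 0 ≤ x r) (hs : E.t₀ ≤ s) (hst : s ≤ t) :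
    x s ≤ x t * exp (E.δ * E.βmax * (t - s)) := by
  set c := E.δ * E.βmax
  have hmono : MonotoneOn (fun r => x r * exp (c * r)) (Icc E.t₀ t) := by
    refine monotoneOn_of_hasDerivWithinAt_nonneg
      (f' := fun r => (E.β r * (E.production x r - E.δ * x r) + c * x r) * exp (c * r))
      (convex_Icc _ _) ((hx.continuousOn.mono fun r hr => E.t₀_sub_τbar_le.trans hr.1).mul
        (by fun_prop)) (fun r hr => ?_) (fun r hr => ?_) <;> rw [interior_Icc] at hr
    · rw [interior_Icc]
      refine (((hx.hasDerivAt hr.1).mul ((hasDerivAt_id r).const_mul c).exp).congr_deriv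
        ?_).hasDerivWithinAt
      simp only [id]; ring
    · have hxr := hnn r ⟨E.t₀_sub_τbar_le.trans hr.1.le, hr.2⟩
      have hS := E.production_nonneg fun j => hnn _
        ⟨by linarith [(E.sub_τ_mem hr.1.le j).1, hr.1], (E.sub_τ_mem hr.1.le j).2.trans_lt hr.2⟩
      have hβ := E.β_mem r hr.1.le
      have : 0 ≤ E.β r * (E.production x r - E.δ * x r) + c * x r := by
        nlinarith [mul_nonneg (mul_nonneg (sub_nonneg.2 hβ.2) E.δ_pos.le) hxr,
          mul_nonneg E.βmin_pos.le hS, mul_le_mul_of_nonneg_right hβ.1 hS]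
      exact mul_nonneg this (exp_pos _).le
  have h := hmono ⟨hs, hst⟩ ⟨hs.trans hst, le_rfl⟩ hst
  rw [mul_sub, exp_sub, ← mul_div_assoc, le_div_iff₀ (exp_pos _)]
  exact h

theorem nonneg (hx : E.IsSolution x) {t : ℝ} (ht : E.t₀ - E.τbar ≤ t) : 0 ≤ x t := by
  by_contra! hneg
  obtain ⟨s, hs, hxs, hbefore⟩ : ∃ s ∈ Ioc E.t₀ t, -x s = 0 ∧ ∀ r ∈ Ico E.t₀ s, -x r < 0 := by
    refine exists_first_hit (f := fun r => -x r) ?_ ?_ (by simpa using hx.2.2.2) (by linarith)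
    · by_contra! htt
      exact hneg.not_ge (hx.2.2.1 t ht htt)
    · exact (hx.continuousOn.mono fun r hr => E.t₀_sub_τbar_le.trans hr.1).neg
  have hnn : ∀ r ∈ Ico (E.t₀ - E.τbar) s, 0 ≤ x r := fun r hr => by
    rcases lt_or_ge r E.t₀ with hr₀ | hr₀
    · exact hx.2.2.1 r hr.1 hr₀
    · linarith [hbefore r ⟨hr₀, hr.2⟩]
  have := hx.le_mul_exp_of_nonneg hnn le_rfl hs.1.le
  rw [neg_eq_zero.1 hxs, zero_mul] at this
  exact this.not_gt hx.2.2.2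

theorem le_mul_exp (hx : E.IsSolution x) {s t : ℝ} (hs : E.t₀ ≤ s) (hst : s ≤ t) :
    x s ≤ x t * exp (E.δ * E.βmax * (t - s)) :=
  hx.le_mul_exp_of_nonneg (fun _ hr => hx.nonneg hr.1) hs hst

theorem pos (hx : E.IsSolution x) {t : ℝ} (ht : E.t₀ ≤ t) : 0 < x t :=
  pos_of_mul_pos_left (hx.2.2.2.trans_le (hx.le_mul_exp le_rfl ht)) (exp_pos _).le

theorem nonneg_sub_τ (hx : E.IsSolution x) {t : ℝ} (ht : E.t₀ ≤ t) (j : Fin E.m) :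
    0 ≤ x (t - E.τ j t) :=
  hx.nonneg (by linarith [(E.sub_τ_mem ht j).1])

theorem nonneg_sub_σ (hx : E.IsSolution x) {t : ℝ} (ht : E.t₀ ≤ t) (j : Fin E.m) :
    0 ≤ x (t - E.σ j t) :=
  hx.nonneg (by linarith [(E.sub_σ_mem ht j).1])

theorem production_le (hx : E.IsSolution x) {t V : ℝ} (ht : E.t₀ ≤ t)
    (hV : ∀ j, x (t - E.τ j t) ≤ V) : E.production x t ≤ (∑ j, E.p j) * V := by
  rw [production, Finset.sum_mul]
  refine Finset.sum_le_sum fun j _ => ?_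
  have hexp : exp (-(E.a j) * x (t - E.σ j t)) ≤ 1 :=
    exp_le_one_iff.2 (by nlinarith [E.a_pos j, hx.nonneg_sub_σ ht j])
  calc E.p j * x (t - E.τ j t) * exp (-(E.a j) * x (t - E.σ j t))
      ≤ E.p j * x (t - E.τ j t) :=
        mul_le_of_le_one_right (mul_nonneg (E.p_pos j).le (hx.nonneg_sub_τ ht j)) hexp
    _ ≤ E.p j * V := mul_le_mul_of_nonneg_left (hV j) (E.p_pos j).le

theorem production_ge (hx : E.IsSolution x) {t w k : ℝ} (ht : E.t₀ ≤ t)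
    (hw : ∀ j, w ≤ x (t - E.τ j t)) (hk : ∀ j, x (t - E.σ j t) ≤ k) :
    w * E.birthRate k ≤ E.production x t := by
  rw [production, birthRate, Finset.mul_sum]
  refine Finset.sum_le_sum fun j _ => ?_
  have hexp : exp (-(E.a j) * k) ≤ exp (-(E.a j) * x (t - E.σ j t)) :=
    exp_le_exp.2 (by nlinarith [E.a_pos j, hk j])
  calc w * (E.p j * exp (-(E.a j) * k))
      = E.p j * (w * exp (-(E.a j) * k)) := by ring
    _ ≤ E.p j * (x (t - E.τ j t) * exp (-(E.a j) * x (t - E.σ j t))) := by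
        have := E.p_pos j
        gcongr
        exacts [hx.nonneg_sub_τ ht j, hw j]
    _ = E.p j * x (t - E.τ j t) * exp (-(E.a j) * x (t - E.σ j t)) := by ring

/-- Barrier argument against `g r = M e^{β⁺ (∑ p_j)(r - s)}`: at a first contact the birth term
is at most `(∑ p_j) g`, and `δ > 0` makes `x' < g'` there. -/
theorem lt_mul_exp_of_lt (hx : E.IsSolution x) {s M t : ℝ} (hs : E.t₀ ≤ s)
    (hM : ∀ r ∈ Icc (s - E.τbar) s, x r < M) (hst : s ≤ t) :
    x t < M * exp (E.βmax * (∑ j, E.p j) * (t - s)) := by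
  set c := E.βmax * ∑ j, E.p j
  have hc : 0 ≤ c := mul_nonneg E.βmax_pos.le E.sum_p_nonneg
  have hM₀ : 0 < M := (hx.pos hs).trans (hM s ⟨by linarith [E.τbar_nonneg], le_rfl⟩)
  set g : ℝ → ℝ := fun r => M * exp (c * (r - s))
  have hg_mono : Monotone g := fun r r' h => by simp only [g]; gcongr
  have hMg : ∀ r, s ≤ r → M ≤ g r := fun r hr => by
    simpa [g] using hg_mono hr
  by_contra! hgt
  obtain ⟨u, hu, hxu, hbefore, hderiv⟩ := exists_first_hit_deriv_nonneg (f := fun r => x r - g r)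
    (f' := fun r => E.β r * (E.production x r - E.δ * x r) - c * g r) (c := 0) hst
    ((hx.continuousOn.mono fun r hr => E.t₀_sub_τbar_le.trans (hs.trans hr.1)).sub (by fun_prop))
    (fun r hr => (hx.hasDerivAt (hs.trans_lt hr.1)).sub
      (((((hasDerivAt_id r).sub_const s).const_mul c).exp.const_mul M).congr_deriv
        (by simp [g]; ring)))
    (by simpa [g] using hM s ⟨by linarith [E.τbar_nonneg], le_rfl⟩)
    (by simpa using hgt)
  have hxu : x u = g u := by simpa [sub_eq_zero] using hxu
  have hu₀ : E.t₀ ≤ u := hs.trans hu.1.le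
  have hwindow : ∀ j, x (u - E.τ j u) ≤ g u := fun j => by
    obtain ⟨hr₁, hr₂⟩ := E.sub_τ_mem hu₀ j
    rcases lt_or_ge (u - E.τ j u) s with hrs | hrs
    · exact (hM _ ⟨by linarith [hu.1], hrs.le⟩).le.trans (hMg u hu.1.le)
    rcases hr₂.lt_or_eq with hru | hru
    · linarith [hbefore _ ⟨hrs, hru⟩, hg_mono hr₂]
    · rw [hru, hxu]
  have hS := hx.production_le hu₀ hwindow
  have hgu : 0 < g u := by positivity
  have hβ₀ := E.β_pos hu₀
  have : E.β u * (E.production x u - E.δ * x u) < c * g u := calc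
    E.β u * (E.production x u - E.δ * x u) < E.β u * E.production x u := by
      rw [hxu]; nlinarith [mul_pos hβ₀ (mul_pos E.δ_pos hgu)]
    _ ≤ E.β u * ((∑ j, E.p j) * g u) := mul_le_mul_of_nonneg_left hS hβ₀.le
    _ ≤ E.βmax * ((∑ j, E.p j) * g u) :=
      mul_le_mul_of_nonneg_right (E.β_mem u hu₀).2 (mul_nonneg E.sum_p_nonneg hgu.le)
    _ = c * g u := by ring
  linarith

theorem le_mul_exp_of_le (hx : E.IsSolution x) {s M t : ℝ} (hs : E.t₀ ≤ s)
    (hM : ∀ r ∈ Icc (s - E.τbar) s, x r ≤ M) (hst : s ≤ t) :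
    x t ≤ M * exp (E.βmax * (∑ j, E.p j) * (t - s)) := by
  refine le_of_forall_gt_imp_ge_of_dense fun y hy => ?_
  set e := exp (E.βmax * (∑ j, E.p j) * (t - s))
  have hMy : M < y / e := by rwa [lt_div_iff₀ (exp_pos _)]
  have := hx.lt_mul_exp_of_lt hs (fun r hr => (hM r hr).trans_lt hMy) hst
  rw [div_mul_cancel₀ _ (exp_pos _).ne'] at this
  exact this.le

/-- A birth term at `t` as large as that of a population `≤ V` at density `k` forces some
`x (t - σ_j t) ≤ k`, and the two growth estimates carry this low value forward to `t`. -/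
theorem le_of_le_production (hx : E.IsSolution x) {t V k : ℝ} (ht : E.t₀ + 2 * E.τbar ≤ t)
    (hV : ∀ r ∈ Icc (t - E.τbar) t, x r ≤ V) (hS : V * E.birthRate k ≤ E.production x t) :
    x t ≤ k * exp ((E.δ + ∑ j, E.p j) * E.βmax * E.τbar) := by
  have := E.τbar_nonneg; have := E.δ_pos; have := E.βmax_pos; have := E.sum_p_nonneg
  have ht₀ : E.t₀ ≤ t := by linarith
  obtain ⟨j, hj⟩ : ∃ j, x (t - E.σ j t) ≤ k := by
    by_contra! hk
    have hV₀ : 0 < V := (hx.pos ht₀).trans_le (hV t ⟨by linarith, le_rfl⟩)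
    exact hS.not_gt (E.production_lt hV₀ (fun j => hV _ (E.sub_τ_mem ht₀ j)) hk)
  set s := t - E.σ j t
  obtain ⟨hs₁, hs₂⟩ := E.sub_σ_mem ht₀ j
  have hxs : 0 ≤ x s := hx.nonneg_sub_σ ht₀ j
  have hwindow : ∀ r ∈ Icc (s - E.τbar) s, x r ≤ k * exp (E.δ * E.βmax * E.τbar) :=
    fun r hr => calc
      x r ≤ x s * exp (E.δ * E.βmax * (s - r)) := hx.le_mul_exp (by linarith [hr.1]) hr.2
      _ ≤ k * exp (E.δ * E.βmax * E.τbar) := by gcongr <;> linarith [hr.1]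
  calc x t ≤ k * exp (E.δ * E.βmax * E.τbar) * exp (E.βmax * (∑ j, E.p j) * (t - s)) :=
        hx.le_mul_exp_of_le (by linarith) hwindow hs₂
    _ ≤ k * exp (E.δ * E.βmax * E.τbar) * exp (E.βmax * (∑ j, E.p j) * E.τbar) := by
        have : 0 ≤ k := hxs.trans hj
        gcongr
        linarith
    _ = k * exp ((E.δ + ∑ j, E.p j) * E.βmax * E.τbar) := by rw [mul_assoc, ← exp_add]; ring_nf

theorem lt_of_production_lt (hx : E.IsSolution x) {t w k : ℝ} (ht : E.t₀ + E.τbar ≤ t)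
    (hw : ∀ r ∈ Icc (t - E.τbar) t, w ≤ x r) (hS : E.production x t < w * E.birthRate k) :
    k * exp (-(E.δ * E.βmax * E.τbar)) < x t := by
  have := E.τbar_nonneg; have := E.δ_pos; have := E.βmax_pos
  have ht₀ : E.t₀ ≤ t := by linarith
  obtain ⟨j, hj⟩ : ∃ j, k < x (t - E.σ j t) := by
    by_contra! hk
    exact hS.not_ge (hx.production_ge ht₀ (fun j => hw _ (E.sub_τ_mem ht₀ j)) hk)
  obtain ⟨hs₁, hs₂⟩ := E.sub_σ_mem ht₀ j
  have hxt := (hx.pos ht₀).le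
  rw [exp_neg, ← div_eq_mul_inv, div_lt_iff₀ (exp_pos _)]
  calc k < x (t - E.σ j t) := hj
    _ ≤ x t * exp (E.δ * E.βmax * (t - (t - E.σ j t))) := hx.le_mul_exp (by linarith) hs₂
    _ ≤ x t * exp (E.δ * E.βmax * E.τbar) := by gcongr; linarith

theorem exists_forall_le (hx : E.IsSolution x) {K : ℝ} (hK : E.birthRate K ≤ E.δ) :
    ∃ M, ∀ t, E.t₀ - E.τbar ≤ t → x t ≤ M := by
  have := E.τbar_nonneg
  set T := E.t₀ + 2 * E.τbar
  set R := K * exp ((E.δ + ∑ j, E.p j) * E.βmax * E.τbar)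
  obtain ⟨A, hA⟩ : BddAbove (x '' Icc (E.t₀ - E.τbar) T) :=
    isCompact_Icc.bddAbove_image (hx.continuousOn.mono Icc_subset_Ici_self)
  have hAM : A < max A R + 1 := by linarith [le_max_left A R]
  refine ⟨max A R + 1, fun t ht => ?_⟩
  by_contra! hMt
  have hxT : x T < max A R + 1 := (hA ⟨T, ⟨by linarith, le_rfl⟩, rfl⟩).trans_lt hAM
  have hTt : T ≤ t := by
    by_contra! htT
    exact hMt.not_gt ((hA ⟨t, ⟨ht, htT.le⟩, rfl⟩).trans_lt hAM)
  obtain ⟨u, hu, hxu, hbefore, hderiv⟩ := exists_first_hit_deriv_nonneg hTt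
    (hx.continuousOn.mono fun r hr => by simp only [mem_Ici]; linarith [hr.1])
    (fun r hr => hx.hasDerivAt (by linarith [hr.1])) hxT hMt.le
  have hu₀ : E.t₀ ≤ u := by linarith [hu.1]
  have hwindow : ∀ r ∈ Icc (u - E.τbar) u, x r ≤ max A R + 1 := fun r hr => by
    rcases lt_or_ge r T with hrT | hrT
    · exact (hA ⟨r, ⟨by linarith [hr.1, hu.1], hrT.le⟩, rfl⟩).trans hAM.le
    rcases hr.2.lt_or_eq with hru | rfl
    · exact (hbefore r ⟨hrT, hru⟩).le
    · exact hxu.le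
  have hS : (max A R + 1) * E.birthRate K ≤ E.production x u := by
    have hSδ := (mul_nonneg_iff_of_pos_left (E.β_pos hu₀)).1 hderiv
    have hM₀ : 0 ≤ max A R + 1 := (hx.pos (by linarith : E.t₀ ≤ T)).le.trans hxT.le
    rw [hxu] at hSδ
    nlinarith
  have := hx.le_of_le_production (by linarith [hu.1]) hwindow hS
  linarith [le_max_right A R]

theorem exists_pos_forall_le (hx : E.IsSolution x) {K : ℝ} (hK₀ : 0 < K)
    (hK : E.δ ≤ E.birthRate K) : ∃ μ, 0 < μ ∧ ∀ t, E.t₀ ≤ t → μ ≤ x t := by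
  have := E.τbar_nonneg
  set T := E.t₀ + E.τbar
  obtain ⟨q, hq, hqmin⟩ := isCompact_Icc.exists_isMinOn (nonempty_Icc.2 (by linarith : E.t₀ ≤ T))
    (hx.continuousOn.mono fun r hr => E.t₀_sub_τbar_le.trans hr.1)
  set k := K / 2
  have hxq := hx.pos hq.1
  obtain ⟨μ, hμ, hμmin⟩ := exists_between (lt_min hxq (by positivity :
    0 < k * exp (-(E.δ * E.βmax * E.τbar))))
  obtain ⟨hμq, hμk⟩ := lt_min_iff.1 hμmin
  refine ⟨μ, hμ, fun t ht => ?_⟩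
  by_contra! hxt
  obtain ⟨u, hu, hxu, hbefore, hderiv⟩ := exists_first_hit_deriv_nonneg (f := fun r => -x r)
    (f' := fun r => -(E.β r * (E.production x r - E.δ * x r))) (c := -μ) ht
    (hx.continuousOn.mono fun r hr => E.t₀_sub_τbar_le.trans hr.1).neg
    (fun r hr => (hx.hasDerivAt hr.1).neg)
    (by simpa using hμq.trans_le (hqmin ⟨le_rfl, by linarith⟩))
    (by simpa using hxt.le)
  simp only [neg_inj, neg_lt_neg_iff, neg_nonneg] at hxu hbefore hderiv
  have hu₀ : E.t₀ ≤ u := hu.1.le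
  have huT : T ≤ u := by
    by_contra! huT
    exact (hμq.trans_le (hqmin ⟨hu₀, huT.le⟩)).ne' hxu
  have hwindow : ∀ r ∈ Icc (u - E.τbar) u, μ ≤ x r := fun r hr => by
    rcases hr.2.lt_or_eq with hru | rfl
    · exact (hbefore r ⟨by linarith [hr.1], hru⟩).le
    · exact hxu.ge
  have hS : E.production x u < μ * E.birthRate k := by
    have hβ := E.β_pos hu₀
    have hkK : E.δ < E.birthRate k := hK.trans_lt (E.birthRate_strictAnti (by simp [k]; linarith))
    rw [hxu] at hderiv
    have hSδ : E.production x u ≤ E.δ * μ := by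
      by_contra! h
      nlinarith [mul_pos hβ (sub_pos.2 h)]
    nlinarith [mul_lt_mul_of_pos_left hkK hμ]
  exact (hx.lt_of_production_lt huT hwindow hS).not_gt (hxu ▸ hμk)

theorem isBoundedUnder_le (hx : E.IsSolution x) {K : ℝ} (hK : E.birthRate K ≤ E.δ) :
    IsBoundedUnder (· ≤ ·) atTop x := by
  obtain ⟨M, hM⟩ := hx.exists_forall_le hK
  exact isBoundedUnder_of_eventually_le
    (eventually_atTop.2 ⟨E.t₀, fun t ht => hM t (E.t₀_sub_τbar_le.trans ht)⟩)

theorem isBoundedUnder_ge (hx : E.IsSolution x) : IsBoundedUnder (· ≥ ·) atTop x :=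
  isBoundedUnder_of_eventually_ge (eventually_atTop.2 ⟨E.t₀, fun _ ht => (hx.pos ht).le⟩)

theorem limsup_le (hx : E.IsSolution x) {K : ℝ} (hK₀ : 0 < K) (hK : E.birthRate K ≤ E.δ) :
    limsup x atTop ≤ K * exp ((E.δ + ∑ j, E.p j) * E.βmax * E.τbar) := by
  set θ := (E.δ + ∑ j, E.p j) * E.βmax * E.τbar
  set L := limsup x atTop
  have := E.τbar_nonneg
  by_contra! hL
  obtain ⟨k, hKk, hkL⟩ : ∃ k, K < k ∧ k * exp θ < L := by
    simp only [← lt_div_iff₀ (exp_pos θ)] at hL ⊢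
    exact exists_between hL
  have hk : E.birthRate k < E.δ := (E.birthRate_strictAnti hKk).trans_le hK
  have hL₀ : 0 < L := (mul_pos (hK₀.trans hKk) (exp_pos θ)).trans hkL
  have hsmall : ∀ᶠ ε in 𝓝 (0 : ℝ),
      (L + ε) * E.birthRate k < E.δ * (L - ε) - ε ∧ k * exp θ < L - ε := by
    refine (ContinuousAt.eventually_lt (by fun_prop) (by fun_prop) ?_).and
      (ContinuousAt.eventually_lt (by fun_prop) (by fun_prop) (by simpa using hkL))
    simp only [add_zero, sub_zero]
    nlinarith
  obtain ⟨ε, hε, hεS, hεL⟩ := hsmall.exists_gt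
  obtain ⟨T, hT⟩ := eventually_atTop.1
    (eventually_lt_of_limsup_lt (by linarith : L < L + ε) (hx.isBoundedUnder_le hK))
  have hfreq : ∃ᶠ t in atTop, L - ε ≤ x t :=
    (frequently_lt_of_lt_limsup hx.isBoundedUnder_ge.isCoboundedUnder_le
      (by linarith : L - ε < L)).mono fun _ => le_of_lt
  obtain ⟨t, ht, hxt, hderiv⟩ := exists_ge_deriv_ge_of_frequently_ge
    (T := max T E.t₀ + 2 * E.τbar) (mul_pos E.βmin_pos hε)
    (hx.continuousOn.mono fun r hr => by
      simp only [mem_Ici] at hr ⊢; linarith [le_max_right T E.t₀])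
    (fun r hr => hx.hasDerivAt (by simp only [mem_Ioi] at hr; linarith [le_max_right T E.t₀])) hfreq
  simp only [mem_Ioi] at ht
  have hSδ := E.neg_le_of_neg_le_β_mul (by linarith [le_max_right T E.t₀]) hε.le hderiv
  have hwindow : ∀ r ∈ Icc (t - E.τbar) t, x r ≤ L + ε := fun r hr =>
    (hT r (by linarith [hr.1, le_max_left T E.t₀])).le
  have := hx.le_of_le_production (by linarith [le_max_right T E.t₀]) hwindow
    (by nlinarith [mul_le_mul_of_nonneg_left hxt E.δ_pos.le])
  linarith

/-- The lower a priori bound makes the liminf positive, which the balance argument needs. -/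
theorem le_liminf (hx : E.IsSolution x) (hbdd : IsBoundedUnder (· ≤ ·) atTop x) {K : ℝ}
    (hK₀ : 0 < K) (hK : E.δ ≤ E.birthRate K) :
    K * exp (-(E.δ * E.βmax * E.τbar)) ≤ liminf x atTop := by
  set η := E.δ * E.βmax * E.τbar
  set l := liminf x atTop
  have := E.τbar_nonneg
  obtain ⟨μ, hμ, hμx⟩ := hx.exists_pos_forall_le hK₀ hK
  have hl₀ : 0 < l := hμ.trans_le
    (le_liminf_of_le hbdd.isCoboundedUnder_ge (eventually_atTop.2 ⟨E.t₀, hμx⟩))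
  by_contra! hl
  obtain ⟨k, hlk, hkK⟩ : ∃ k, l < k * exp (-η) ∧ k < K := by
    simp only [exp_neg, ← div_eq_mul_inv, lt_div_iff₀ (exp_pos η)] at hl ⊢
    exact exists_between hl
  have hk : E.δ < E.birthRate k := hK.trans_lt (E.birthRate_strictAnti hkK)
  have hsmall : ∀ᶠ ε in 𝓝 (0 : ℝ),
      E.δ * (l + ε) + ε < (l - ε) * E.birthRate k ∧ l + ε < k * exp (-η) := by
    refine (ContinuousAt.eventually_lt (by fun_prop) (by fun_prop) ?_).and
      (ContinuousAt.eventually_lt (by fun_prop) (by fun_prop) (by simpa using hlk))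
    simp only [add_zero, sub_zero]
    nlinarith
  obtain ⟨ε, hε, hεS, hεl⟩ := hsmall.exists_gt
  obtain ⟨T, hT⟩ := eventually_atTop.1
    (eventually_lt_of_lt_liminf (by linarith : l - ε < l) hx.isBoundedUnder_ge)
  have hfreq : ∃ᶠ t in atTop, x t ≤ l + ε :=
    (frequently_lt_of_liminf_lt hbdd.isCoboundedUnder_ge (by linarith : l < l + ε)).mono
      fun _ => le_of_lt
  obtain ⟨t, ht, hxt, hderiv⟩ := exists_le_deriv_le_of_frequently_le
    (T := max T E.t₀ + E.τbar) (mul_pos E.βmin_pos hε)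
    (hx.continuousOn.mono fun r hr => by
      simp only [mem_Ici] at hr ⊢; linarith [le_max_right T E.t₀])
    (fun r hr => hx.hasDerivAt (by simp only [mem_Ioi] at hr; linarith [le_max_right T E.t₀])) hfreq
  simp only [mem_Ioi] at ht
  have hSδ := E.le_of_β_mul_le (by linarith [le_max_right T E.t₀]) hε.le hderiv
  have hwindow : ∀ r ∈ Icc (t - E.τbar) t, l - ε ≤ x r := fun r hr =>
    (hT r (by linarith [hr.1, le_max_left T E.t₀])).le
  have := hx.lt_of_production_lt (by linarith [le_max_right T E.t₀]) hwindow
    (by nlinarith [mul_le_mul_of_nonneg_left hxt E.δ_pos.le])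
  linarith

theorem liminf_limsup_bounds (hx : E.IsSolution x) {K : ℝ} (hK₀ : 0 < K)
    (hK : E.birthRate K = E.δ) :
    K * exp (-(E.δ * E.βmax * E.τbar)) ≤ liminf x atTop ∧ liminf x atTop ≤ limsup x atTop ∧
      limsup x atTop ≤ K * exp ((E.δ + ∑ j, E.p j) * E.βmax * E.τbar) :=
  ⟨hx.le_liminf (hx.isBoundedUnder_le hK.le) hK₀ hK.ge,
    liminf_le_limsup (hx.isBoundedUnder_le hK.le) hx.isBoundedUnder_ge, hx.limsup_le hK₀ hK.le⟩

theorem eventually_bounds (hx : E.IsSolution x) {K μ M : ℝ} (hK₀ : 0 < K)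
    (hK : E.birthRate K = E.δ) (hμ : μ < K * exp (-(E.δ * E.βmax * E.τbar)))
    (hM : K * exp ((E.δ + ∑ j, E.p j) * E.βmax * E.τbar) < M) :
    ∀ᶠ t in atTop, μ ≤ x t ∧ x t ≤ M := by
  obtain ⟨hl, -, hu⟩ := hx.liminf_limsup_bounds hK₀ hK
  filter_upwards [eventually_lt_of_lt_liminf (hμ.trans_le hl) hx.isBoundedUnder_ge,
    eventually_lt_of_limsup_lt (hu.trans_lt hM) (hx.isBoundedUnder_le hK.le)] with t h₁ h₂
  exact ⟨h₁.le, h₂.le⟩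

end IsSolution

end NicholsonEquation

theorem nicholson_permanence_general
    (m : ℕ) (hm : 1 ≤ m) (p a : Fin m → ℝ)
    (hp : ∀ j, 0 < p j) (ha : ∀ j, 0 < a j) (δ : ℝ) (hδ : 0 < δ)
    (t₀ : ℝ) (β : ℝ → ℝ) (τ σ : Fin m → ℝ → ℝ)
    (hτ0 : ∀ j, ∀ t ∈ Set.Ici t₀, 0 ≤ τ j t)
    (hσ0 : ∀ j, ∀ t ∈ Set.Ici t₀, 0 ≤ σ j t)
    -- β⁻ := inf β > 0 and β⁺ := sup β on [t₀,∞)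
    (βminus βplus : ℝ)
    (hβminus : IsGLB (β '' Set.Ici t₀) βminus) (hβmpos : 0 < βminus)
    (hβplus : IsLUB (β '' Set.Ici t₀) βplus)
    -- τbar is the max over j of the sups of τ_j and σ_j over [t₀,∞)
    (τbar : ℝ)
    (hτbar : IsLUB ((⋃ j, τ j '' Set.Ici t₀) ∪ ⋃ j, σ j '' Set.Ici t₀) τbar)
    -- p > δ and K is the positive equilibrium
    (K : ℝ) (hK0 : 0 < K) (hK : ∑ j, p j * Real.exp (-(a j) * K) = δ) :
    (∀ x : ℝ → ℝ, NicholsonSolution m p a δ t₀ τbar β τ σ x →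
      K * Real.exp (-(2 * δ * βplus * τbar)) ≤ Filter.liminf x Filter.atTop ∧
      Filter.liminf x Filter.atTop ≤ Filter.limsup x Filter.atTop ∧
      Filter.limsup x Filter.atTop ≤ K * Real.exp (2 * (δ + ∑ j, p j) * βplus * τbar)) ∧
    (∃ m' M' : ℝ, 0 < m' ∧ 0 < M' ∧
      ∀ x : ℝ → ℝ, NicholsonSolution m p a δ t₀ τbar β τ σ x →
        ∀ᶠ t in Filter.atTop, m' ≤ x t ∧ x t ≤ M') := by
  let E : NicholsonEquation :=
    { m, p, a, δ, t₀, β, τ, σ, τbar, βmin := βminus, βmax := βplus, nonempty := ⟨⟨0, hm⟩⟩,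
      p_pos := hp, a_pos := ha, δ_pos := hδ, βmin_pos := hβmpos,
      β_mem := fun t ht => ⟨hβminus.1 ⟨t, ht, rfl⟩, hβplus.1 ⟨t, ht, rfl⟩⟩
      τ_mem := fun j t ht => ⟨hτ0 j t ht, hτbar.1 (.inl (mem_iUnion.2 ⟨j, t, ht, rfl⟩))⟩
      σ_mem := fun j t ht => ⟨hσ0 j t ht, hτbar.1 (.inr (mem_iUnion.2 ⟨j, t, ht, rfl⟩))⟩ }
  have hKE : E.birthRate K = E.δ := hK
  have : 0 ≤ δ * βplus * τbar := mul_nonneg (mul_nonneg hδ.le E.βmax_pos.le) E.τbar_nonneg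
  have : 0 ≤ (δ + ∑ j, p j) * βplus * τbar :=
    mul_nonneg (mul_nonneg (add_nonneg hδ.le E.sum_p_nonneg) E.βmax_pos.le) E.τbar_nonneg
  have hlow : K * exp (-(2 * δ * βplus * τbar)) ≤ K * exp (-(δ * βplus * τbar)) := by
    gcongr K * exp ?_; linarith
  have hup : K * exp ((δ + ∑ j, p j) * βplus * τbar) ≤
      K * exp (2 * (δ + ∑ j, p j) * βplus * τbar) := by
    gcongr K * exp ?_; linarith
  refine ⟨fun x hx => ?_, K * exp (-(2 * δ * βplus * τbar)) / 2,
    K * exp (2 * (δ + ∑ j, p j) * βplus * τbar) + 1, by positivity, by positivity, fun x hx => ?_⟩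
  · have hx : E.IsSolution x := hx
    obtain ⟨h₁, h₂, h₃⟩ := hx.liminf_limsup_bounds hK0 hKE
    exact ⟨hlow.trans h₁, h₂, h₃.trans hup⟩
  · have hx : E.IsSolution x := hx
    exact hx.eventually_bounds hK0 hKE ((half_lt_self (by positivity)).trans_le hlow)
      (hup.trans_lt (lt_add_one _))

theorem nicholson_permanence
    (m : ℕ) (hm : 1 ≤ m) (p a : Fin m → ℝ)
    (hp : ∀ j, 0 < p j) (ha : ∀ j, 0 < a j) (δ : ℝ) (hδ : 0 < δ)
    (t₀ : ℝ) (β : ℝ → ℝ) (τ σ : Fin m → ℝ → ℝ)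
    (hβc : ContinuousOn β (Set.Ici t₀))
    (hτc : ∀ j, ContinuousOn (τ j) (Set.Ici t₀))
    (hσc : ∀ j, ContinuousOn (σ j) (Set.Ici t₀))
    (hτ0 : ∀ j, ∀ t ∈ Set.Ici t₀, 0 ≤ τ j t)
    (hσ0 : ∀ j, ∀ t ∈ Set.Ici t₀, 0 ≤ σ j t)
    -- β⁻ := inf β > 0 and β⁺ := sup β on [t₀,∞)
    (βminus βplus : ℝ)
    (hβminus : IsGLB (β '' Set.Ici t₀) βminus) (hβmpos : 0 < βminus)
    (hβplus : IsLUB (β '' Set.Ici t₀) βplus)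
    -- τbar is the max over j of the sups of τ_j and σ_j over [t₀,∞)
    (τbar : ℝ)
    (hτbar : IsLUB ((⋃ j, τ j '' Set.Ici t₀) ∪ ⋃ j, σ j '' Set.Ici t₀) τbar)
    -- p > δ and K is the positive equilibrium
    (hpδ : δ < ∑ j, p j)
    (K : ℝ) (hK0 : 0 < K) (hK : ∑ j, p j * Real.exp (-(a j) * K) = δ) :
    (∀ x : ℝ → ℝ, NicholsonSolution m p a δ t₀ τbar β τ σ x →
      K * Real.exp (-(2 * δ * βplus * τbar)) ≤ Filter.liminf x Filter.atTop ∧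
      Filter.liminf x Filter.atTop ≤ Filter.limsup x Filter.atTop ∧
      Filter.limsup x Filter.atTop ≤ K * Real.exp (2 * (δ + ∑ j, p j) * βplus * τbar)) ∧
    (∃ m' M' : ℝ, 0 < m' ∧ 0 < M' ∧
      ∀ x : ℝ → ℝ, NicholsonSolution m p a δ t₀ τbar β τ σ x →
        ∀ᶠ t in Filter.atTop, m' ≤ x t ∧ x t ≤ M') :=
  nicholson_permanence_general m hm p a hp ha δ hδ t₀ β τ σ hτ0 hσ0 βminus βplus hβminus hβmpos
    hβplus τbar hτbar K hK0 hK
end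

section
/- (Lemma 3.1(a).) Let I = [a,b] be a real interval with a < b, where b is a real number or +∞ (i.e., I = [a,b] or I = [a,∞)). Let f : I → I be continuous with a unique fixed point x* ∈ (a,b), and suppose (f(x) − x*)(x − x*) < 0 for all x ∈ (a,b) with x ≠ x*. If x* is a global attractor for the difference equation x_{n+1} = f(x_n) (i.e., for every x₀ ∈ I the iterates f^n(x₀) converge to x*), then there are no points c, d ∈ I with c < d such that f([c,d]) ⊇ [c,d]. -/
/-! If `[c, d] ⊆ f [c, d]`, pick `β, α ∈ [c, d]` with `f β = d` and `f α = c`, and `u ∈ [c, d]` with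
`f u = α`. Since `f` sends each side of `x*` into the other, `f β = d > c` forces `c < x*`, then
`f α = c < x*` forces `α > x*`, and `f u = α > x*` forces `u < x*`. Thus `f (f u) = c ≤ u`, while
`f (f a) ≥ a` at the left end `a` of `I`, so `f ∘ f` has a fixed point in `[a, u]`. That point is a
period-two orbit lying below `x*`, which cannot converge to `x*`. -/

open Set Filter Topology Function

theorem Function.IsPeriodicPt.eq_of_tendsto {α : Type*} [TopologicalSpace α] [T2Space α]
    {f : α → α} {n : ℕ} {z x : α} (hz : IsPeriodicPt f n z) (hn : 0 < n)
    (h : Tendsto (fun k => f^[k] z) atTop (𝓝 x)) : z = x := by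
  have hsub : Tendsto (fun k => f^[n * k] z) atTop (𝓝 x) :=
    h.comp (tendsto_id.const_mul_atTop' hn)
  simp only [(hz.mul_const _).eq] at hsub
  exact tendsto_nhds_unique tendsto_const_nhds hsub

theorem ContinuousOn.nonpos_of_nonpos_on_interior {X : Type*} [TopologicalSpace X] {s : Set X}
    {g : X → ℝ} (hs : s ⊆ closure (interior s)) (hg : ContinuousOn g s)
    (h : ∀ x ∈ interior s, g x ≤ 0) : ∀ x ∈ s, g x ≤ 0 := fun x hx =>
  ContinuousWithinAt.closure_le (hs hx) ((hg x hx).mono interior_subset) continuousWithinAt_const h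

theorem exists_isFixedPt_Icc {g : ℝ → ℝ} {a u : ℝ} (hau : a ≤ u) (hg : ContinuousOn g (Icc a u))
    (ha : a ≤ g a) (hu : g u ≤ u) : ∃ z ∈ Icc a u, IsFixedPt g z := by
  obtain ⟨z, hz, hgz⟩ := intermediate_value_Icc' hau (hg.sub continuousOn_id)
    (show (0 : ℝ) ∈ Icc (g u - u) (g a - a) from ⟨by linarith, by linarith⟩)
  exact ⟨z, hz, sub_eq_zero.mp hgz⟩

section SideSwapping

variable {f : ℝ → ℝ} {xstar x : ℝ}

theorem lt_of_lt_apply_of_mul_nonpos (hfix : f xstar = xstar)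
    (hswap : (f x - xstar) * (x - xstar) ≤ 0) (hfx : xstar < f x) : x < xstar := by
  refine lt_of_le_of_ne (by nlinarith) ?_
  rintro rfl
  exact hfx.ne' hfix

theorem lt_of_apply_lt_of_mul_nonpos (hfix : f xstar = xstar)
    (hswap : (f x - xstar) * (x - xstar) ≤ 0) (hfx : f x < xstar) : xstar < x := by
  refine lt_of_le_of_ne (by nlinarith) ?_
  rintro rfl
  exact hfx.ne hfix

theorem exists_lt_apply_apply_eq_left_of_Icc_subset_image {c d : ℝ} (hfix : f xstar = xstar)
    (hswap : ∀ x ∈ Icc c d, (f x - xstar) * (x - xstar) ≤ 0) (hcd : c < d)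
    (hcov : Icc c d ⊆ f '' Icc c d) : ∃ u ∈ Icc c d, u < xstar ∧ f (f u) = c := by
  obtain ⟨β, hβ, hfβ⟩ := hcov (right_mem_Icc.mpr hcd.le)
  obtain ⟨α, hα, hfα⟩ := hcov (left_mem_Icc.mpr hcd.le)
  have hc : c < xstar := by
    by_contra! hc
    have := lt_of_lt_apply_of_mul_nonpos hfix (hswap β hβ) (hfβ ▸ hc.trans_lt hcd)
    linarith [hβ.1]
  have hα' : xstar < α := lt_of_apply_lt_of_mul_nonpos hfix (hswap α hα) (hfα ▸ hc)
  obtain ⟨u, hu, hfu⟩ := hcov hα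
  exact ⟨u, hu, lt_of_lt_apply_of_mul_nonpos hfix (hswap u hu) (hfu ▸ hα'), by rw [hfu, hfα]⟩

end SideSwapping

theorem global_attractor_no_expanding_interval_general
    (a : ℝ) (I : Set ℝ)
    (hI : I = Set.Ici a ∨ ∃ b, a < b ∧ I = Set.Icc a b)
    (f : ℝ → ℝ) (hfc : ContinuousOn f I) (hmaps : Set.MapsTo f I I)
    (xstar : ℝ) (hx : xstar ∈ interior I) (hfix : f xstar = xstar)
    (hneg : ∀ x ∈ interior I, x ≠ xstar → (f x - xstar) * (x - xstar) < 0)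
    (hattr : ∀ x₀ ∈ I, Filter.Tendsto (fun n => f^[n] x₀) Filter.atTop (nhds xstar)) :
    ¬ ∃ c ∈ I, ∃ d ∈ I, c < d ∧ Set.Icc c d ⊆ f '' Set.Icc c d := by
  rintro ⟨c, hc, d, hd, hcd, hcov⟩
  obtain ⟨hconv, ha⟩ : Convex ℝ I ∧ IsLeast I a := by
    rcases hI with rfl | ⟨b, hab, rfl⟩
    exacts [⟨convex_Ici a, isLeast_Ici⟩, ⟨convex_Icc a b, isLeast_Icc hab.le⟩]
  have hord : I.OrdConnected := hconv.ordConnected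
  have hswap : ∀ x ∈ I, (f x - xstar) * (x - xstar) ≤ 0 := by
    refine ContinuousOn.nonpos_of_nonpos_on_interior ?_ (by fun_prop) fun x hx => ?_
    · rw [hconv.closure_interior_eq_closure_of_nonempty_interior ⟨xstar, hx⟩]
      exact subset_closure
    · rcases eq_or_ne x xstar with rfl | hne
      · simp
      · exact (hneg x hx hne).le
  obtain ⟨u, hu, hux, hffu⟩ := exists_lt_apply_apply_eq_left_of_Icc_subset_image hfix
    (fun x hx => hswap x (hord.out hc hd hx)) hcd hcov
  have huI : u ∈ I := hord.out hc hd hu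
  have hau : Icc a u ⊆ I := hord.out ha.1 huI
  obtain ⟨z, hz, hz2⟩ := exists_isFixedPt_Icc (g := f^[2]) (ha.2 huI)
    ((hfc.comp hfc hmaps).mono hau) (ha.2 (hmaps (hmaps ha.1))) (hffu.trans_le hu.1)
  have hzx : z = xstar := IsPeriodicPt.eq_of_tendsto hz2 two_pos (hattr z (hau hz))
  linarith [hz.2]

theorem global_attractor_no_expanding_interval
    (a : ℝ) (I : Set ℝ)
    (hI : I = Set.Ici a ∨ ∃ b, a < b ∧ I = Set.Icc a b)
    (f : ℝ → ℝ) (hfc : ContinuousOn f I) (hmaps : Set.MapsTo f I I)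
    (xstar : ℝ) (hx : xstar ∈ interior I) (hfix : f xstar = xstar)
    (huniq : ∀ x ∈ I, f x = x → x = xstar)
    (hneg : ∀ x ∈ interior I, x ≠ xstar → (f x - xstar) * (x - xstar) < 0)
    (hattr : ∀ x₀ ∈ I, Filter.Tendsto (fun n => f^[n] x₀) Filter.atTop (nhds xstar)) :
    ¬ ∃ c ∈ I, ∃ d ∈ I, c < d ∧ Set.Icc c d ⊆ f '' Set.Icc c d :=
  global_attractor_no_expanding_interval_general a I hI f hfc hmaps xstar hx hfix hneg hattr
end

section
/- (Claim (i) in the proof of Theorem 3.3.) Let m ≥ 1, p_j, a_j, δ ∈ (0,∞), and define f(x) := δ^{−1} Σ_{j=1}^m p_j e^{−a_j x}. If max_j a_j / min_j a_j < 3/2, then the Schwarzian derivative of f is negative everywhere: Sf(x) := f'''(x)/f'(x) − (3/2)(f''(x)/f'(x))² < 0 for all x > 0. -/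
/-!
Writing `f = δ⁻¹ g` with `g x = ∑ⱼ pⱼ e^{-aⱼ x}`, the factor `δ⁻¹` cancels from the Schwarzian,
and with the positive weights `wⱼ = pⱼ e^{-aⱼ x}` one has `g^{(n)}(x) = (-1)ⁿ ∑ⱼ wⱼ aⱼⁿ`.
Since `g' < 0`, `Sg(x) < 0` amounts to `(∑ w a³)(∑ w a) < (3/2)(∑ w a²)²`, and expanding both
sides as double sums this holds term by term: `aⱼ³aₖ < (3/2)aⱼ²aₖ²` is `aⱼ < (3/2)aₖ`,
which is the hypothesis on `max a / min a`.
-/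

open Real Finset

noncomputable def schwarzian (f : ℝ → ℝ) (x : ℝ) : ℝ :=
  iteratedDeriv 3 f x / deriv f x - 3 / 2 * (iteratedDeriv 2 f x / deriv f x) ^ 2

theorem schwarzian_const_mul {c : ℝ} (hc : c ≠ 0) (f : ℝ → ℝ) (x : ℝ) :
    schwarzian (fun y => c * f y) x = schwarzian f x := by
  simp only [schwarzian, iteratedDeriv_const_mul_field, deriv_const_mul_field,
    mul_div_mul_left _ _ hc]

theorem schwarzian_neg_iff {f : ℝ → ℝ} {x : ℝ} (hf : deriv f x ≠ 0) :
    schwarzian f x < 0 ↔ iteratedDeriv 3 f x * deriv f x < 3 / 2 * iteratedDeriv 2 f x ^ 2 := by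
  have hsq : 0 < deriv f x ^ 2 := by positivity
  have hquot : schwarzian f x =
      (iteratedDeriv 3 f x * deriv f x - 3 / 2 * iteratedDeriv 2 f x ^ 2) / deriv f x ^ 2 := by
    rw [schwarzian]
    field_simp
  rw [hquot, div_neg_iff, ← sub_neg]
  simp [hsq, hsq.not_gt]

section ExpSum

variable {ι : Type*} [Fintype ι]

theorem iteratedDeriv_sum_mul_exp (p c : ι → ℝ) (n : ℕ) (x : ℝ) :
    iteratedDeriv n (fun y => ∑ j, p j * exp (c j * y)) x =
      ∑ j, p j * c j ^ n * exp (c j * x) := by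
  rw [iteratedDeriv_fun_sum (fun j _ => by fun_prop)]
  simp only [iteratedDeriv_const_mul_field, iteratedDeriv_exp_const_mul, mul_assoc]

theorem sum_mul_pow_three_mul_sum_mul_lt [Nonempty ι] {w a : ι → ℝ} (hw : ∀ j, 0 < w j)
    (ha : ∀ j, 0 < a j) (hratio : ∀ j k, a j < 3 / 2 * a k) :
    (∑ j, w j * a j ^ 3) * ∑ j, w j * a j < 3 / 2 * (∑ j, w j * a j ^ 2) ^ 2 := by
  rw [sq, sum_mul_sum, sum_mul_sum, mul_sum]
  refine sum_lt_sum_of_nonempty univ_nonempty fun j _ => ?_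
  rw [mul_sum]
  refine sum_lt_sum_of_nonempty univ_nonempty fun k _ => ?_
  have hpos : 0 < w j * w k * a j ^ 2 * a k :=
    mul_pos (mul_pos (mul_pos (hw j) (hw k)) (pow_pos (ha j) 2)) (ha k)
  nlinarith [mul_lt_mul_of_pos_left (hratio j k) hpos]

theorem schwarzian_sum_mul_exp_neg_lt_zero [Nonempty ι] {p a : ι → ℝ} (hp : ∀ j, 0 < p j)
    (ha : ∀ j, 0 < a j) (hratio : ∀ j k, a j < 3 / 2 * a k) (x : ℝ) :
    schwarzian (fun y => ∑ j, p j * exp (-(a j) * y)) x < 0 := by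
  have hw (j : ι) : 0 < p j * exp (-(a j) * x) := mul_pos (hp j) (exp_pos _)
  have hderiv (n : ℕ) : iteratedDeriv n (fun y => ∑ j, p j * exp (-(a j) * y)) x =
      (-1) ^ n * ∑ j, p j * exp (-(a j) * x) * a j ^ n := by
    rw [iteratedDeriv_sum_mul_exp, mul_sum]
    exact sum_congr rfl fun j _ => by rw [neg_pow]; ring
  have hd1 : deriv (fun y => ∑ j, p j * exp (-(a j) * y)) x =
      -∑ j, p j * exp (-(a j) * x) * a j := by
    rw [← iteratedDeriv_one, hderiv]
    simp only [pow_one, neg_one_mul]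
  have hd1_neg : deriv (fun y => ∑ j, p j * exp (-(a j) * y)) x < 0 := by
    rw [hd1, neg_neg_iff_pos]
    exact sum_pos (fun j _ => mul_pos (hw j) (ha j)) univ_nonempty
  rw [schwarzian_neg_iff hd1_neg.ne, hd1, hderiv, hderiv]
  convert sum_mul_pow_three_mul_sum_mul_lt hw ha hratio using 1 <;> ring

end ExpSum

theorem nicholson_schwarzian_negative_general
    (m : ℕ) (p a : Fin m → ℝ) (δ : ℝ)
    (hp : ∀ j, 0 < p j) (ha : ∀ j, 0 < a j) (hδ : 0 < δ)
    (f : ℝ → ℝ) (hf : f = fun x => δ⁻¹ * ∑ j, p j * Real.exp (-(a j) * x))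
    (aplus aminus : ℝ)
    (haplus : IsGreatest (Set.range a) aplus)
    (haminus : IsLeast (Set.range a) aminus)
    (hH1 : aplus / aminus < 3 / 2) :
    ∀ x : ℝ, 0 < x →
      iteratedDeriv 3 f x / deriv f x
        - (3 / 2) * (iteratedDeriv 2 f x / deriv f x) ^ 2 < 0 := by
  intro x _
  obtain ⟨j₀, -⟩ := haplus.1
  have : Nonempty (Fin m) := ⟨j₀⟩
  have haminus_pos : 0 < aminus := by
    obtain ⟨j, rfl⟩ := haminus.1
    exact ha j
  have hratio (j k : Fin m) : a j < 3 / 2 * a k := by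
    have hj : a j ≤ aplus := haplus.2 ⟨j, rfl⟩
    have hk : aminus ≤ a k := haminus.2 ⟨k, rfl⟩
    have hspread : aplus < 3 / 2 * aminus := (div_lt_iff₀ haminus_pos).1 hH1
    linarith
  subst hf
  change schwarzian (fun y => δ⁻¹ * _) x < 0
  rw [schwarzian_const_mul (inv_ne_zero hδ.ne')]
  exact schwarzian_sum_mul_exp_neg_lt_zero hp ha hratio x

theorem nicholson_schwarzian_negative
    (m : ℕ) (hm : 1 ≤ m) (p a : Fin m → ℝ) (δ : ℝ)
    (hp : ∀ j, 0 < p j) (ha : ∀ j, 0 < a j) (hδ : 0 < δ)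
    (f : ℝ → ℝ) (hf : f = fun x => δ⁻¹ * ∑ j, p j * Real.exp (-(a j) * x))
    (aplus aminus : ℝ)
    (haplus : IsGreatest (Set.range a) aplus)
    (haminus : IsLeast (Set.range a) aminus)
    (hH1 : aplus / aminus < 3 / 2) :
    ∀ x : ℝ, 0 < x →
      iteratedDeriv 3 f x / deriv f x
        - (3 / 2) * (iteratedDeriv 2 f x / deriv f x) ^ 2 < 0 :=
  nicholson_schwarzian_negative_general m p a δ hp ha hδ f hf aplus aminus haplus haminus hH1
end

section
/- (Claim (iii) in the proof of Theorem 3.3.) Let m ≥ 1, p_j, a_j, δ ∈ (0,∞) with Σ_j p_j > δ, let K > 0 satisfy Σ_j p_j e^{−a_j K} = δ, set f(x) := δ^{−1} Σ_j p_j e^{−a_j x} and a⁺ := max_j a_j. If ζ > 0 and a⁺K(e^{δζ} − 1) ≤ 1, then (1 − e^{−δζ}) · f(K e^{−δζ}) ≤ (1 − e^{−δζ}) · exp(e^{−δζ}) < 1; in particular θ := K e^{−δζ} satisfies (1 − e^{−δζ})f(θ) < 1. -/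
/-! With `u = e^{-δζ}`, the hypothesis says `a⁺ K (1 - u) ≤ u`. Lowering the argument of `f` from
`K` to `K u` multiplies each term by at most `exp (a⁺ K (1 - u)) ≤ e^u`, and `f K = 1`, so
`f (K u) ≤ e^u`. Finally `(1 - u) e^u < 1` is `1 - u < e^{-u}`. -/

open Finset Real

theorem one_sub_mul_exp_lt_one {x : ℝ} (hx : x ≠ 0) : (1 - x) * exp x < 1 := by
  calc (1 - x) * exp x < exp (-x) * exp x :=
        mul_lt_mul_of_pos_right (by linarith [add_one_lt_exp (neg_ne_zero.mpr hx)]) (exp_pos x)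
    _ = 1 := by rw [← exp_add, neg_add_cancel, exp_zero]

theorem mul_one_sub_exp_neg_le_exp_neg {A c : ℝ} (h : A * (exp c - 1) ≤ 1) :
    A * (1 - exp (-c)) ≤ exp (-c) := by
  have hfactor : A * (1 - exp (-c)) = exp (-c) * (A * (exp c - 1)) := by
    rw [exp_neg]; field_simp
  rw [hfactor]
  exact mul_le_of_le_one_right (exp_pos _).le h

theorem sum_mul_exp_neg_mul_le {ι : Type*} (s : Finset ι) {p a : ι → ℝ} {A x y : ℝ}
    (hp : ∀ j ∈ s, 0 ≤ p j) (ha : ∀ j ∈ s, a j ≤ A) (hyx : y ≤ x) :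
    ∑ j ∈ s, p j * exp (-a j * y) ≤ exp (A * (x - y)) * ∑ j ∈ s, p j * exp (-a j * x) := by
  rw [mul_sum]
  refine sum_le_sum fun j hj => ?_
  rw [mul_left_comm, ← exp_add]
  gcongr
  · exact hp j hj
  · nlinarith [ha j hj]

theorem nicholson_theta_bound_general
    (m : ℕ) (p a : Fin m → ℝ) (δ : ℝ)
    (hp : ∀ j, 0 < p j) (hδ : 0 < δ)
    (K : ℝ) (hK0 : 0 < K) (hK : ∑ j, p j * Real.exp (-(a j) * K) = δ)
    (f : ℝ → ℝ) (hf : f = fun x => δ⁻¹ * ∑ j, p j * Real.exp (-(a j) * x))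
    (aplus : ℝ) (haplus : IsGreatest (Set.range a) aplus)
    (ζ : ℝ) (hζ : 0 < ζ)
    (hH2 : aplus * K * (Real.exp (δ * ζ) - 1) ≤ 1) :
    (1 - Real.exp (-(δ * ζ))) * f (K * Real.exp (-(δ * ζ))) ≤
      (1 - Real.exp (-(δ * ζ))) * Real.exp (Real.exp (-(δ * ζ))) ∧
    (1 - Real.exp (-(δ * ζ))) * Real.exp (Real.exp (-(δ * ζ))) < 1 ∧
    (1 - Real.exp (-(δ * ζ))) * f (K * Real.exp (-(δ * ζ))) < 1 := by
  set u := exp (-(δ * ζ))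
  have hu1 : u ≤ 1 := exp_le_one_iff.mpr (by nlinarith)
  have hshift : aplus * (K - K * u) ≤ u := by
    have := mul_one_sub_exp_neg_le_exp_neg hH2
    linarith
  have hfu : f (K * u) ≤ exp u := by
    have hsum := sum_mul_exp_neg_mul_le univ (fun j _ => (hp j).le)
      (fun j _ => haplus.2 ⟨j, rfl⟩) (mul_le_of_le_one_right hK0.le hu1)
    rw [hK] at hsum
    calc f (K * u) ≤ δ⁻¹ * (exp (aplus * (K - K * u)) * δ) := by
          rw [hf]; exact mul_le_mul_of_nonneg_left hsum (inv_nonneg.mpr hδ.le)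
      _ = exp (aplus * (K - K * u)) := by field_simp
      _ ≤ exp u := exp_le_exp.mpr hshift
  have hle := mul_le_mul_of_nonneg_left hfu (sub_nonneg.mpr hu1)
  have hlt := one_sub_mul_exp_lt_one (exp_pos (-(δ * ζ))).ne'
  exact ⟨hle, hlt, hle.trans_lt hlt⟩

theorem nicholson_theta_bound
    (m : ℕ) (hm : 1 ≤ m) (p a : Fin m → ℝ) (δ : ℝ)
    (hp : ∀ j, 0 < p j) (ha : ∀ j, 0 < a j) (hδ : 0 < δ)
    (hpδ : δ < ∑ j, p j)
    (K : ℝ) (hK0 : 0 < K) (hK : ∑ j, p j * Real.exp (-(a j) * K) = δ)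
    (f : ℝ → ℝ) (hf : f = fun x => δ⁻¹ * ∑ j, p j * Real.exp (-(a j) * x))
    (aplus : ℝ) (haplus : IsGreatest (Set.range a) aplus)
    (ζ : ℝ) (hζ : 0 < ζ)
    (hH2 : aplus * K * (Real.exp (δ * ζ) - 1) ≤ 1) :
    (1 - Real.exp (-(δ * ζ))) * f (K * Real.exp (-(δ * ζ))) ≤
      (1 - Real.exp (-(δ * ζ))) * Real.exp (Real.exp (-(δ * ζ))) ∧
    (1 - Real.exp (-(δ * ζ))) * Real.exp (Real.exp (-(δ * ζ))) < 1 ∧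
    (1 - Real.exp (-(δ * ζ))) * f (K * Real.exp (-(δ * ζ))) < 1 :=
  nicholson_theta_bound_general m p a δ hp hδ K hK0 hK f hf aplus haplus ζ hζ hH2
end

section
/- Let p > δ > 0, a > 0, K := (1/a) log(p/δ), f(x) := (p/δ) e^{−ax}, ζ > 0, μ := 1 − e^{−δζ}, θ := K e^{−δζ}. Assume μ f(x) < 1 for all x ≥ θ, and define h(x) := θ/(1 − μ f(x)) for x ≥ θ. Then h(K) = K, and (h(x) − K)(x − K) < 0 for every x ≥ θ with x ≠ K. -/
/-! Since `f K = 1` and `θ = K (1 - μ)`, one has `h x - K = K μ (f x - f K) / (1 - μ f x)`,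
whose sign is that of `f x - f K`, hence opposite to that of `x - K` because `f` is strictly
decreasing. -/

theorem StrictAnti.sub_mul_sub_neg {R : Type*} [Ring R] [LinearOrder R] [IsStrictOrderedRing R]
    {f : R → R} (hf : StrictAnti f) {x y : R} (hxy : x ≠ y) : (f x - f y) * (x - y) < 0 := by
  rcases hxy.lt_or_gt with hlt | hgt
  · exact mul_neg_of_pos_of_neg (sub_pos.2 (hf hlt)) (sub_neg.2 hlt)
  · exact mul_neg_of_neg_of_pos (sub_neg.2 (hf hgt)) (sub_pos.2 hgt)

theorem mul_one_sub_div_one_sub_mul_eq_self_of_eq_one {K μ y : ℝ} (hμ : μ ≠ 1) (hy : y = 1) :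
    K * (1 - μ) / (1 - μ * y) = K := by
  rw [hy, mul_one, mul_div_cancel_right₀ _ (sub_ne_zero.2 hμ.symm)]

theorem StrictAnti.mul_one_sub_div_sub_mul_sub_neg {f : ℝ → ℝ} (hf : StrictAnti f) {K μ x : ℝ}
    (hK : 0 < K) (hμ : 0 < μ) (hfK : f K = 1) (hx : μ * f x < 1) (hxK : x ≠ K) :
    (K * (1 - μ) / (1 - μ * f x) - K) * (x - K) < 0 := by
  have hden : 0 < 1 - μ * f x := sub_pos.2 hx
  have hdiff : K * (1 - μ) / (1 - μ * f x) - K = K * μ / (1 - μ * f x) * (f x - f K) := by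
    rw [hfK]
    field_simp
    ring
  rw [hdiff, mul_assoc]
  exact mul_neg_of_pos_of_neg (by positivity) (hf.sub_mul_sub_neg hxK)

theorem strictAnti_const_mul_exp_neg_mul {c a : ℝ} (hc : 0 < c) (ha : 0 < a) :
    StrictAnti fun x => c * Real.exp (-a * x) := fun x y hxy =>
  mul_lt_mul_of_pos_left (Real.exp_lt_exp.2 (by nlinarith)) hc

theorem const_mul_exp_neg_mul_one_div_mul_log {c a : ℝ} (hc : 0 < c) (ha : a ≠ 0) :
    c * Real.exp (-a * (1 / a * Real.log c)) = 1 := by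
  rw [show -a * (1 / a * Real.log c) = -Real.log c by field_simp, Real.exp_neg, Real.exp_log hc,
    mul_inv_cancel₀ hc.ne']

theorem nicholson_one_pair_h_properties
    (p a δ : ℝ) (hδ : 0 < δ) (hpδ : δ < p) (ha : 0 < a)
    (K : ℝ) (hKdef : K = (1 / a) * Real.log (p / δ))
    (f : ℝ → ℝ) (hf : f = fun x => (p / δ) * Real.exp (-a * x))
    (ζ : ℝ) (hζ : 0 < ζ)
    (μ : ℝ) (hμ : μ = 1 - Real.exp (-(δ * ζ)))
    (θ : ℝ) (hθ : θ = K * Real.exp (-(δ * ζ)))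
    (hwd : ∀ x : ℝ, θ ≤ x → μ * f x < 1)
    (h : ℝ → ℝ) (hh : h = fun x => θ / (1 - μ * f x)) :
    h K = K ∧ ∀ x : ℝ, θ ≤ x → x ≠ K → (h x - K) * (x - K) < 0 := by
  have hexp : Real.exp (-(δ * ζ)) = 1 - μ := by rw [hμ]; ring
  have hμ0 : 0 < μ := by
    rw [hμ, sub_pos, Real.exp_lt_one_iff]
    exact neg_neg_of_pos (mul_pos hδ hζ)
  have hμ1 : μ ≠ 1 := by
    rw [hμ]
    linarith [Real.exp_pos (-(δ * ζ))]
  have hpδ0 : 0 < p / δ := div_pos (hδ.trans hpδ) hδ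
  have hK0 : 0 < K := hKdef ▸ mul_pos (one_div_pos.2 ha) (Real.log_pos ((one_lt_div hδ).2 hpδ))
  have hfK : f K = 1 := by
    rw [hf, hKdef]
    exact const_mul_exp_neg_mul_one_div_mul_log hpδ0 ha.ne'
  have hanti : StrictAnti f := hf ▸ strictAnti_const_mul_exp_neg_mul hpδ0 ha
  subst hh
  rw [hθ, hexp] at hwd ⊢
  exact ⟨mul_one_sub_div_one_sub_mul_eq_self_of_eq_one hμ1 hfK,
    fun x hx hxK => hanti.mul_one_sub_div_sub_mul_sub_neg hK0 hμ0 hfK (hwd x hx) hxK⟩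
end

section
/- (Case 1 in the proofs of Theorems 3.1 and 3.3.) Assume p := Σ_{j=1}^m p_j > δ and let K > 0 satisfy Σ_j p_j e^{−a_j K} = δ. If x is a solution of the Nicholson equation with admissible initial data such that lim_{t→∞} x(t) = C exists with C > 0, then C = K. -/
/-!
Along the solution the delayed terms `x(t − τ_j(t))`, `x(t − σ_j(t))` converge to `C` because
the delays are bounded, so the bracket in the equation tends to `C (Σ_j p_j e^{−a_j C} − δ)`.
If that limit were nonzero, then, as `β ≥ β⁻ > 0`, the derivative would eventually keep a fixed
sign with modulus bounded away from zero, and `x` would diverge. Hence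
`Σ_j p_j e^{−a_j C} = δ = Σ_j p_j e^{−a_j K}`, and `s ↦ Σ_j p_j e^{−a_j s}` is strictly decreasing.
-/

open Filter Set Topology

theorem tendsto_atTop_of_hasDerivWithinAt_of_eventually_ge {f f' : ℝ → ℝ} {t₀ ε : ℝ}
    (hε : 0 < ε) (hf : ∀ t ∈ Ici t₀, HasDerivWithinAt f (f' t) (Ici t₀) t)
    (hf' : ∀ᶠ t in atTop, ε ≤ f' t) : Tendsto f atTop atTop := by
  obtain ⟨T, hT⟩ := eventually_atTop.mp (hf'.and (eventually_ge_atTop t₀))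
  have hsub : Ici T ⊆ Ici t₀ := Ici_subset_Ici.2 (hT T le_rfl).2
  have hcont : ContinuousOn f (Ici t₀) := fun t ht => (hf t ht).continuousWithinAt
  have hmono : MonotoneOn (fun t => f t - ε * t) (Ici T) := by
    refine monotoneOn_of_hasDerivWithinAt_nonneg (convex_Ici T)
      (f' := fun t => f' t - ε) ?_ (fun t ht => ?_) (fun t ht => ?_)
    · exact (hcont.mono hsub).sub (continuousOn_const.mul continuousOn_id)
    · rw [interior_Ici] at ht ⊢
      exact ((hf t (hsub (mem_Ici.2 ht.le))).sub
        (by simpa using ((hasDerivAt_id t).const_mul ε).hasDerivWithinAt)).mono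
        (Ioi_subset_Ici_self.trans hsub)
    · rw [interior_Ici] at ht
      exact sub_nonneg.2 (hT t ht.le).1
  refine tendsto_atTop_mono' _ ((eventually_ge_atTop T).mono fun t ht => ?_)
    (tendsto_atTop_add_const_left _ (f T - ε * T) (tendsto_id.const_mul_atTop hε))
  have := hmono self_mem_Ici (mem_Ici.2 ht) ht
  simp only [id] at this ⊢
  linarith

theorem eq_zero_of_tendsto_of_hasDerivWithinAt_mul {f β F : ℝ → ℝ} {t₀ b c L : ℝ}
    (hb : 0 < b) (hβ : ∀ t ∈ Ici t₀, b ≤ β t)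
    (hf : ∀ t ∈ Ici t₀, HasDerivWithinAt f (β t * F t) (Ici t₀) t)
    (hfc : Tendsto f atTop (𝓝 c)) (hF : Tendsto F atTop (𝓝 L)) : L = 0 := by
  by_contra hL
  wlog hLpos : 0 < L generalizing f F L c
  · refine this (f := -f) (F := -F) (L := -L) (c := -c) (fun t ht => ?_) hfc.neg hF.neg
      (neg_ne_zero.2 hL) (by linarith [lt_of_le_of_ne (not_lt.1 hLpos) hL])
    simpa using (hf t ht).neg
  have hder : ∀ᶠ t in atTop, b * (L / 2) ≤ β t * F t := by
    filter_upwards [hF.eventually (eventually_ge_nhds (half_lt_self hLpos)),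
      eventually_ge_atTop t₀] with t hFt ht
    exact mul_le_mul (hβ t ht) hFt (by positivity) (hb.le.trans (hβ t ht))
  exact not_tendsto_atTop_of_tendsto_nhds hfc
    (tendsto_atTop_of_hasDerivWithinAt_of_eventually_ge (by positivity) hf hder)

theorem Filter.Tendsto.comp_sub_of_eventually_le {α : Type*} {x : ℝ → α} {l : Filter α}
    {d : ℝ → ℝ} {M : ℝ} (hx : Tendsto x atTop l) (hd : ∀ᶠ t in atTop, d t ≤ M) :
    Tendsto (fun t => x (t - d t)) atTop l :=
  hx.comp <| tendsto_atTop_mono' _ (hd.mono fun t ht => by simp only [id]; linarith)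
    (tendsto_atTop_add_const_right _ (-M) tendsto_id)

theorem tendsto_nicholson_rhs {m : ℕ} {p a : Fin m → ℝ} {δ C M : ℝ} {x : ℝ → ℝ}
    {τ σ : Fin m → ℝ → ℝ} (hx : Tendsto x atTop (𝓝 C))
    (hτ : ∀ j, ∀ᶠ t in atTop, τ j t ≤ M) (hσ : ∀ j, ∀ᶠ t in atTop, σ j t ≤ M) :
    Tendsto (fun t => (∑ j, p j * x (t - τ j t) * Real.exp (-(a j) * x (t - σ j t))) - δ * x t)
      atTop (𝓝 (C * ((∑ j, p j * Real.exp (-(a j) * C)) - δ))) := by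
  have hlim := (tendsto_finsetSum Finset.univ fun j _ =>
    ((hx.comp_sub_of_eventually_le (hτ j)).const_mul (p j)).mul
      ((Real.continuous_exp.tendsto _).comp
        ((hx.comp_sub_of_eventually_le (hσ j)).const_mul (-(a j))))).sub (hx.const_mul δ)
  have hlimit : C * ((∑ j, p j * Real.exp (-(a j) * C)) - δ)
      = (∑ j, p j * C * Real.exp (-(a j) * C)) - δ * C := by
    rw [mul_sub, Finset.mul_sum, mul_comm C δ]
    exact congrArg (· - δ * C) (Finset.sum_congr rfl fun j _ => by ring)
  rw [hlimit]
  exact hlim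

theorem strictAnti_sum_mul_exp_neg_mul {ι : Type*} [Fintype ι] [Nonempty ι] {p a : ι → ℝ}
    (hp : ∀ j, 0 < p j) (ha : ∀ j, 0 < a j) :
    StrictAnti fun s => ∑ j, p j * Real.exp (-(a j) * s) := fun _ _ hst =>
  Finset.sum_lt_sum_of_nonempty Finset.univ_nonempty fun j _ =>
    mul_lt_mul_of_pos_left (Real.exp_lt_exp.2 (by nlinarith [ha j])) (hp j)

theorem nicholson_convergent_solution_limit_is_K_general
    (m : ℕ) (hm : 1 ≤ m) (p a : Fin m → ℝ)
    (hp : ∀ j, 0 < p j) (ha : ∀ j, 0 < a j) (δ : ℝ)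
    (t₀ : ℝ) (β : ℝ → ℝ) (τ σ : Fin m → ℝ → ℝ)
    (βminus : ℝ) (hβminus : IsGLB (β '' Set.Ici t₀) βminus) (hβmpos : 0 < βminus)
    (τbar : ℝ)
    (hτbar : IsLUB ((⋃ j, τ j '' Set.Ici t₀) ∪ ⋃ j, σ j '' Set.Ici t₀) τbar)
    (K : ℝ) (hK : ∑ j, p j * Real.exp (-(a j) * K) = δ)
    (x : ℝ → ℝ) (hx : NicholsonSolution m p a δ t₀ τbar β τ σ x)
    (C : ℝ) (hC : 0 < C) (hlim : Filter.Tendsto x Filter.atTop (nhds C)) :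
    C = K := by
  have : Nonempty (Fin m) := Fin.pos_iff_nonempty.mp hm
  obtain ⟨-, hxd, -, -⟩ := hx
  have hτ : ∀ j, ∀ᶠ t in atTop, τ j t ≤ τbar := fun j => (eventually_ge_atTop t₀).mono
    fun t ht => hτbar.1 (Or.inl (mem_iUnion.2 ⟨j, t, ht, rfl⟩))
  have hσ : ∀ j, ∀ᶠ t in atTop, σ j t ≤ τbar := fun j => (eventually_ge_atTop t₀).mono
    fun t ht => hτbar.1 (Or.inr (mem_iUnion.2 ⟨j, t, ht, rfl⟩))
  have hrhs_zero := eq_zero_of_tendsto_of_hasDerivWithinAt_mul hβmpos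
    (fun t ht => hβminus.1 ⟨t, ht, rfl⟩) hxd hlim (tendsto_nicholson_rhs hlim hτ hσ)
  have hC_equilibrium : ∑ j, p j * Real.exp (-(a j) * C) = δ :=
    sub_eq_zero.1 ((mul_eq_zero.1 hrhs_zero).resolve_left hC.ne')
  exact (strictAnti_sum_mul_exp_neg_mul hp ha).injective (hC_equilibrium.trans hK.symm)

theorem nicholson_convergent_solution_limit_is_K
    (m : ℕ) (hm : 1 ≤ m) (p a : Fin m → ℝ)
    (hp : ∀ j, 0 < p j) (ha : ∀ j, 0 < a j) (δ : ℝ) (hδ : 0 < δ)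
    (t₀ : ℝ) (β : ℝ → ℝ) (τ σ : Fin m → ℝ → ℝ)
    (hβc : ContinuousOn β (Set.Ici t₀))
    (hτc : ∀ j, ContinuousOn (τ j) (Set.Ici t₀))
    (hσc : ∀ j, ContinuousOn (σ j) (Set.Ici t₀))
    (hτ0 : ∀ j, ∀ t ∈ Set.Ici t₀, 0 ≤ τ j t)
    (hσ0 : ∀ j, ∀ t ∈ Set.Ici t₀, 0 ≤ σ j t)
    (βminus : ℝ) (hβminus : IsGLB (β '' Set.Ici t₀) βminus) (hβmpos : 0 < βminus)
    (hβub : ∃ B, ∀ t ∈ Set.Ici t₀, β t ≤ B)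
    (τbar : ℝ)
    (hτbar : IsLUB ((⋃ j, τ j '' Set.Ici t₀) ∪ ⋃ j, σ j '' Set.Ici t₀) τbar)
    (hpδ : δ < ∑ j, p j)
    (K : ℝ) (hK0 : 0 < K) (hK : ∑ j, p j * Real.exp (-(a j) * K) = δ)
    (x : ℝ → ℝ) (hx : NicholsonSolution m p a δ t₀ τbar β τ σ x)
    (C : ℝ) (hC : 0 < C) (hlim : Filter.Tendsto x Filter.atTop (nhds C)) :
    C = K :=
  nicholson_convergent_solution_limit_is_K_general m hm p a hp ha δ t₀ β τ σ βminus hβminus hβmpos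
    τbar hτbar K hK x hx C hC hlim
end
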